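/- Let N ≥ 2 and let X ⊆ [0,1] be a Borel set that is S_N-saturated. Then for any N-adic rationals d₁, d₂ with 0 < d₁ < d₂ < 1, one has λ(X ∩ [d₁, d₂]) = λ(X ∩ [0, d₂ − d₁]). -/

import Mathlib

/-- A real number is an `N`-adic rational if it equals `k / N^m` for some `k : ℤ`, `m : ℕ`. -/
def IsNAdic (N : ℕ) (x : ℝ) : Prop :=
  ∃ (k : ℤ) (m : ℕ), x = (k : ℝ) / (N : ℝ) ^ m

/-- Membership (as a map of `[0,1]`) in the generalized Thompson group `F(N)`:
`f 0 = 0`, `f 1 = 1`, and there is a finite partition `0 = a 0 < a 1 < ⋯ < a n = 1`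
of `[0,1]` by `N`-adic rationals such that on each piece `[a i, a (i+1)]` the map `f`
is affine with slope an integer power of `N`.  (Such an `f` is automatically an
increasing piecewise-linear homeomorphism of `[0,1]` onto itself, with all
non-differentiability points `N`-adic.) -/
def InFN (N : ℕ) (f : ℝ → ℝ) : Prop :=
  f 0 = 0 ∧ f 1 = 1 ∧
    ∃ (n : ℕ) (a : ℕ → ℝ), 0 < n ∧ a 0 = 0 ∧ a n = 1 ∧
      (∀ i < n, a i < a (i + 1)) ∧
      (∀ i ≤ n, IsNAdic N (a i)) ∧
      (∀ i < n, ∃ q : ℤ, ∀ x ∈ Set.Icc (a i) (a (i + 1)),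
        f x = f (a i) + (N : ℝ) ^ q * (x - a i))

/-- A set `X ⊆ [0,1]` is `S_N`-saturated if for every `x ∈ X` and every `f ∈ F(N)`
differentiable at `x` with `f'(x) = 1`, one has `f(x) ∈ X`. -/
def SNSaturated (N : ℕ) (X : Set ℝ) : Prop :=
  ∀ x ∈ X, ∀ f : ℝ → ℝ, InFN N f → HasDerivAt f 1 x → f x ∈ X

/-!
For `a = N⁻ᵖ`, the element of `F(N)` with slopes `N, 1, 1/N` and breakpoints `a, 1 - N a`
translates `(a, 1 - N a)` by `g = (N - 1) a`, and its conjugate by `x ↦ 1 - x` translates back.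
Hence membership in a saturated `X` is invariant under translation by multiples of `g` as long
as one stays `N a` away from `0` and `1`. Translating `X ∩ (0, d₂ - d₁)` by the largest multiple
of `g` below `d₁` therefore matches `X ∩ (d₁, d₂)` up to sets of measure `2 N a`, which tends
to `0` as `p → ∞`.
-/

open MeasureTheory Set Filter Topology

lemma IsNAdic.mul {N : ℕ} {x y : ℝ} (hx : IsNAdic N x) (hy : IsNAdic N y) : IsNAdic N (x * y) := by
  obtain ⟨k, m, rfl⟩ := hx
  obtain ⟨k', m', rfl⟩ := hy
  exact ⟨k * k', m + m', by push_cast; rw [pow_add, div_mul_div_comm]⟩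

lemma IsNAdic.one_sub {N : ℕ} {x : ℝ} (hx : IsNAdic N x) : IsNAdic N (1 - x) := by
  obtain ⟨k, m, rfl⟩ := hx
  by_cases h : (N : ℝ) ^ m = 0
  · exact ⟨1, 0, by simp [h]⟩
  · exact ⟨N ^ m - k, m, by push_cast; field_simp⟩

lemma isNAdic_natCast (N : ℕ) : IsNAdic N N := ⟨N, 0, by simp⟩

lemma isNAdic_inv_pow (N p : ℕ) : IsNAdic N ((N : ℝ) ^ p)⁻¹ := ⟨1, p, by simp⟩

lemma natCast_add_one_mul_inv_pow_lt_one {N p : ℕ} (hN : 2 ≤ N) (hp : 2 ≤ p) :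
    ((N : ℝ) + 1) * ((N : ℝ) ^ p)⁻¹ < 1 := by
  have hN₂ : (2 : ℝ) ≤ N := by exact_mod_cast hN
  rw [← div_eq_mul_inv, div_lt_one (by positivity)]
  calc (N : ℝ) + 1 < N ^ 2 := by nlinarith
    _ ≤ N ^ p := pow_le_pow_right₀ (by linarith) hp

lemma inFN_of_three_pieces {N : ℕ} {f : ℝ → ℝ} {b₁ b₂ : ℝ} (h₀ : f 0 = 0) (h₁ : f 1 = 1)
    (hb₁ : 0 < b₁) (hb₁₂ : b₁ < b₂) (hb₂ : b₂ < 1) (hb₁N : IsNAdic N b₁) (hb₂N : IsNAdic N b₂)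
    (q₁ q₂ q₃ : ℤ) (hf₁ : ∀ x ∈ Icc 0 b₁, f x = (N : ℝ) ^ q₁ * x)
    (hf₂ : ∀ x ∈ Icc b₁ b₂, f x = f b₁ + (N : ℝ) ^ q₂ * (x - b₁))
    (hf₃ : ∀ x ∈ Icc b₂ 1, f x = f b₂ + (N : ℝ) ^ q₃ * (x - b₂)) : InFN N f := by
  refine ⟨h₀, h₁, 3, fun i => match i with | 0 => 0 | 1 => b₁ | 2 => b₂ | _ => 1,
    by norm_num, rfl, rfl, fun i hi => ?_, fun i hi => ?_, fun i hi => ?_⟩ <;> interval_cases i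
  exacts [hb₁, hb₁₂, hb₂, ⟨0, 0, by simp⟩, hb₁N, hb₂N, ⟨1, 0, by simp⟩,
    ⟨q₁, fun x hx => by simp [h₀, hf₁ x hx]⟩, ⟨q₂, hf₂⟩, ⟨q₃, hf₃⟩]

lemma InFN.reflect {N : ℕ} {f : ℝ → ℝ} (hf : InFN N f) : InFN N (fun x => 1 - f (1 - x)) := by
  obtain ⟨h₀, h₁, n, a, hn, ha₀, haₙ, hmono, hadic, hpiece⟩ := hf
  refine ⟨by simp [h₁], by simp [h₀], n, fun i => 1 - a (n - i), hn, by simp [haₙ], by simp [ha₀],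
    fun i hi => ?_, fun i hi => (hadic (n - i) (by omega)).one_sub, fun i hi => ?_⟩
  all_goals have hk : n - i = n - (i + 1) + 1 := by omega
  · simp only [hk]
    linarith [hmono (n - (i + 1)) (by omega)]
  · obtain ⟨q, hq⟩ := hpiece (n - (i + 1)) (by omega)
    refine ⟨q, fun x hx => ?_⟩
    simp only [hk, mem_Icc] at hx ⊢
    have hx' := hq (1 - x) ⟨by linarith, by linarith⟩
    have hend := hq _ ⟨(hmono _ (by omega)).le, le_rfl⟩
    simp only [sub_sub_cancel]
    linear_combination hend - hx'

noncomputable def thompsonShift (N : ℕ) (a x : ℝ) : ℝ :=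
  if x ≤ a then N * x else if x ≤ 1 - N * a then x + (N - 1) * a else 1 + (x - 1) / N

lemma thompsonShift_eq_add {N : ℕ} {a x : ℝ} (hx : a < x) (hx' : x ≤ 1 - N * a) :
    thompsonShift N a x = x + (N - 1) * a := by
  simp [thompsonShift, not_le.2 hx, hx']

lemma inFN_thompsonShift {N : ℕ} {a : ℝ} (hN : 0 < N) (ha : IsNAdic N a) (ha₀ : 0 < a)
    (ha₁ : (N + 1) * a < 1) : InFN N (thompsonShift N a) := by
  have hN' : (0 : ℝ) < N := by exact_mod_cast hN
  have hNa : 0 < N * a := mul_pos hN' ha₀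
  have hab : a < 1 - N * a := by linarith
  have hfa : thompsonShift N a a = N * a := by simp [thompsonShift]
  have hfb : thompsonShift N a (1 - N * a) = 1 - a := by
    rw [thompsonShift_eq_add hab le_rfl]; ring
  refine inFN_of_three_pieces (by simp [thompsonShift, ha₀.le])
    (by simp [thompsonShift, not_le.2 (show a < 1 by linarith), not_le.2 hNa]) ha₀ hab
    (by linarith) ha (((isNAdic_natCast N).mul ha).one_sub) 1 0 (-1)
    (fun x hx => by simp [thompsonShift, hx.2]) (fun x hx => ?_) (fun x hx => ?_)
  · rcases hx.1.eq_or_lt with rfl | hlt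
    · simp
    · rw [thompsonShift_eq_add hlt hx.2, hfa, zpow_zero]; ring
  · rcases hx.1.eq_or_lt with rfl | hlt
    · simp
    · rw [hfb, thompsonShift, if_neg (by linarith), if_neg (not_le.2 hlt)]
      field_simp
      ring

lemma add_nat_mul_mem_iff {X : Set ℝ} {g l r : ℝ} (hg : 0 ≤ g)
    (h : ∀ y ∈ Ioo l r, y + g ∈ X ↔ y ∈ X) {x : ℝ} (hx : l < x) :
    ∀ j : ℕ, x + j * g < r → (x + j * g ∈ X ↔ x ∈ X)
  | 0 => by simp
  | j + 1 => fun hj => by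
    have hjg : 0 ≤ j * g := by positivity
    push_cast at hj
    rw [← add_nat_mul_mem_iff hg h hx j (by linarith), Nat.cast_succ, add_one_mul, ← add_assoc]
    exact h _ ⟨by linarith, by linarith⟩

lemma volume_inter_Ioo_le_add (X : Set ℝ) {s s' t t' e : ℝ} (hs : s ≤ s') (ht : t' ≤ t)
    (he : s' - s + (t - t') ≤ e) :
    volume (X ∩ Ioo s t) ≤ volume (X ∩ Ioo s' t') + ENNReal.ofReal e := by
  have hsub : X ∩ Ioo s t ⊆ X ∩ Ioo s' t' ∪ (Ioc s s' ∪ Ico t' t) := by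
    rintro x ⟨hxX, hxs, hxt⟩
    by_cases hxs' : x ≤ s'
    · exact Or.inr (Or.inl ⟨hxs, hxs'⟩)
    by_cases hxt' : t' ≤ x
    · exact Or.inr (Or.inr ⟨hxt', hxt⟩)
    exact Or.inl ⟨hxX, not_le.1 hxs', not_le.1 hxt'⟩
  calc volume (X ∩ Ioo s t)
      ≤ volume (X ∩ Ioo s' t') + (volume (Ioc s s') + volume (Ico t' t)) :=
        (measure_mono hsub).trans <| (measure_union_le _ _).trans (by gcongr; apply measure_union_le)
    _ ≤ volume (X ∩ Ioo s' t') + ENNReal.ofReal e := by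
        rw [Real.volume_Ioc, Real.volume_Ico,
          ← ENNReal.ofReal_add (by linarith) (by linarith)]
        gcongr

lemma volume_inter_Ioo_add_eq {X : Set ℝ} {c s t : ℝ} (h : ∀ x ∈ Ioo s t, x + c ∈ X ↔ x ∈ X) :
    volume (X ∩ Ioo (s + c) (t + c)) = volume (X ∩ Ioo s t) := by
  rw [← measure_preimage_add_right volume c]
  congr 1
  ext x
  simp only [mem_preimage, mem_inter_iff, mem_Ioo, add_lt_add_iff_right]
  exact ⟨fun ⟨hx, hxI⟩ => ⟨(h x hxI).1 hx, hxI⟩, fun ⟨hx, hxI⟩ => ⟨(h x hxI).2 hx, hxI⟩⟩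

lemma le_of_eventually_le_add_of_tendsto {ι M : Type*} [AddZeroClass M] [Preorder M]
    [TopologicalSpace M] [ContinuousAdd M] [ClosedIciTopology M] {l : Filter ι} [l.NeBot]
    {x y : M} {e : ι → M} (he : Tendsto e l (𝓝 0)) (h : ∀ᶠ i in l, x ≤ y + e i) : x ≤ y := by
  simpa using ge_of_tendsto (tendsto_const_nhds.add he) h

section Saturated

variable {N : ℕ} {X : Set ℝ} {a d₁ d₂ : ℝ}

lemma SNSaturated.add_mem_of_eqOn (hX : SNSaturated N X) {f : ℝ → ℝ}
    (hf : InFN N f) {c l r x : ℝ} (hfc : EqOn f (· + c) (Ioo l r)) (hx : x ∈ Ioo l r)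
    (hxX : x ∈ X) : x + c ∈ X := by
  have hderiv : HasDerivAt f 1 x :=
    ((hasDerivAt_id x).add_const c).congr_of_eventuallyEq
      (eventuallyEq_of_mem (Ioo_mem_nhds hx.1 hx.2) hfc)
  simpa [hfc hx] using hX x hxX f hf hderiv

lemma SNSaturated.add_mem_iff (hX : SNSaturated N X) (hN : 0 < N)
    (ha : IsNAdic N a) (ha₀ : 0 < a) (ha₁ : (N + 1) * a < 1) {x : ℝ} (hx : x ∈ Ioo a (1 - N * a)) :
    x + (N - 1) * a ∈ X ↔ x ∈ X := by
  have hf := inFN_thompsonShift hN ha ha₀ ha₁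
  refine ⟨fun hxX => ?_, hX.add_mem_of_eqOn hf
    (fun y hy => thompsonShift_eq_add hy.1 hy.2.le) hx⟩
  have hinv : EqOn (fun y => 1 - thompsonShift N a (1 - y)) (· + -((N - 1) * a))
      (Ioo (N * a) (1 - a)) := fun y hy => by
    simp only
    rw [thompsonShift_eq_add (by linarith [hy.2]) (by linarith [hy.1])]
    ring
  simpa using hX.add_mem_of_eqOn hf.reflect hinv
    ⟨by linarith [hx.1], by linarith [hx.2]⟩ hxX

lemma SNSaturated.exists_translate (hX : SNSaturated N X) (hN : 1 < N) (ha : IsNAdic N a)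
    (ha₀ : 0 < a) (ha₁ : (N + 1) * a < 1) (hd₁ : 0 ≤ d₁) (hd₂ : d₂ ≤ 1) :
    ∃ c ≤ d₁, d₁ ≤ N * a + c ∧ volume (X ∩ Ioo (N * a + c) (d₂ - d₁ - N * a + c)) =
      volume (X ∩ Ioo (N * a) (d₂ - d₁ - N * a)) := by
  have hN' : (1 : ℝ) < N := by exact_mod_cast hN
  set g := ((N : ℝ) - 1) * a
  have hg : 0 < g := mul_pos (by linarith) ha₀
  set j := ⌊d₁ / g⌋₊
  have hjg : j * g ≤ d₁ := (le_div_iff₀ hg).1 (Nat.floor_le (div_nonneg hd₁ hg.le))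
  have hjg' : d₁ < (j + 1) * g := (div_lt_iff₀ hg).1 (Nat.lt_floor_add_one _)
  refine ⟨j * g, hjg, by linarith, volume_inter_Ioo_add_eq fun x hx => ?_⟩
  exact add_nat_mul_mem_iff hg.le (fun y hy => hX.add_mem_iff (by omega) ha ha₀ ha₁ hy)
    (by nlinarith [hx.1]) j (by linarith [hx.2])

lemma SNSaturated.volume_inter_Ioo_almost_eq (hX : SNSaturated N X) (hN : 1 < N)
    (ha : IsNAdic N a) (ha₀ : 0 < a) (ha₁ : (N + 1) * a < 1) (hd₁ : 0 ≤ d₁) (hd₂ : d₂ ≤ 1) :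
    volume (X ∩ Ioo d₁ d₂) ≤ volume (X ∩ Ioo 0 (d₂ - d₁)) + ENNReal.ofReal (2 * (N * a)) ∧
      volume (X ∩ Ioo 0 (d₂ - d₁)) ≤ volume (X ∩ Ioo d₁ d₂) + ENNReal.ofReal (2 * (N * a)) := by
  obtain ⟨c, hc, hc', hshift⟩ := hX.exists_translate hN ha ha₀ ha₁ hd₁ hd₂
  have hNa : 0 ≤ (N : ℝ) * a := by positivity
  constructor
  · calc volume (X ∩ Ioo d₁ d₂)
        ≤ volume (X ∩ Ioo (N * a + c) (d₂ - d₁ - N * a + c)) + ENNReal.ofReal (2 * (N * a)) :=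
          volume_inter_Ioo_le_add X hc' (by linarith) (by linarith)
      _ ≤ volume (X ∩ Ioo 0 (d₂ - d₁)) + ENNReal.ofReal (2 * (N * a)) := by
          rw [hshift]
          gcongr ?_ + _
          exact measure_mono (inter_subset_inter_right X (Ioo_subset_Ioo hNa (by linarith)))
  · calc volume (X ∩ Ioo 0 (d₂ - d₁))
        ≤ volume (X ∩ Ioo (N * a) (d₂ - d₁ - N * a)) + ENNReal.ofReal (2 * (N * a)) :=
          volume_inter_Ioo_le_add X hNa (by linarith) (by linarith)
      _ ≤ volume (X ∩ Ioo d₁ d₂) + ENNReal.ofReal (2 * (N * a)) := by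
          rw [← hshift]
          gcongr ?_ + _
          exact measure_mono (inter_subset_inter_right X (Ioo_subset_Ioo hc' (by linarith)))

end Saturated

theorem statement9 (N : ℕ) (hN : 2 ≤ N) (X : Set ℝ) (hXsat : SNSaturated N X)
    (d₁ d₂ : ℝ) (h01 : 0 < d₁) (h21 : d₂ < 1) :
    MeasureTheory.volume (X ∩ Set.Icc d₁ d₂) =
      MeasureTheory.volume (X ∩ Set.Icc 0 (d₂ - d₁)) := by
  simp only [← measure_congr ((ae_eq_refl X).inter Ioo_ae_eq_Icc)]
  have hN' : (1 : ℝ) < N := by exact_mod_cast hN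
  have hsmall : Tendsto (fun p : ℕ => ENNReal.ofReal (2 * (N * ((N : ℝ) ^ p)⁻¹))) atTop (𝓝 0) := by
    simpa using ENNReal.tendsto_ofReal
      (((tendsto_inv_atTop_zero.comp (tendsto_pow_atTop_atTop_of_one_lt hN')).const_mul
        (N : ℝ)).const_mul 2)
  have happrox : ∀ᶠ p : ℕ in atTop, _ := eventually_atTop.2 ⟨2, fun p hp =>
    hXsat.volume_inter_Ioo_almost_eq (by omega) (isNAdic_inv_pow N p) (by positivity)
      (natCast_add_one_mul_inv_pow_lt_one hN hp) h01.le h21.le⟩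
  exact le_antisymm (le_of_eventually_le_add_of_tendsto hsmall (happrox.mono fun _ h => h.1))
    (le_of_eventually_le_add_of_tendsto hsmall (happrox.mono fun _ h => h.2))
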